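/- arXiv:math/9907084 — 10 statements merged into one kernel-verified Lean document; each statement's English description precedes it below -/
import Mathlib

section
/- Let M = m₁ × m₂ × m₃ where m₁, m₂, m₃ are subspaces of a Lie algebra g. Then M is a subalgebra of the Nahm algebra A(g) if and only if [mᵢ, mᵢ₊₁] ⊆ mᵢ₊₂ for i = 1, 2, 3 (indices mod 3). -/
def nahmMul (𝕜 : Type*) [RCLike 𝕜] {L : Type*} [LieRing L] [LieAlgebra 𝕜 L]
    (X Y : Fin 3 → L) : Fin 3 → L :=
  fun i => (2 : 𝕜)⁻¹ • (⁅X (i + 1), Y (i + 2)⁆ + ⁅Y (i + 1), X (i + 2)⁆)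

theorem nahm_subalgebra_iff (𝕜 : Type*) [RCLike 𝕜] (L : Type*) [LieRing L] [LieAlgebra 𝕜 L]
    (m : Fin 3 → Submodule 𝕜 L) :
    (∀ X ∈ Submodule.pi Set.univ m, ∀ Y ∈ Submodule.pi Set.univ m,
        nahmMul 𝕜 X Y ∈ Submodule.pi Set.univ m) ↔
      ∀ i : Fin 3, ∀ x ∈ m i, ∀ y ∈ m (i + 1), ⁅x, y⁆ ∈ m (i + 2) := by
  have two_ne : (2 : 𝕜) ≠ 0 := two_ne_zero
  constructor
  · intro h i x hx y hy
    set X : Fin 3 → L := fun j => if j = i then x else 0 with hX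
    set Y : Fin 3 → L := fun j => if j = i + 1 then y else 0 with hY
    have hXm : X ∈ Submodule.pi Set.univ m := by
      intro j _
      simp only [hX]
      split
      · next hj => subst hj; exact hx
      · exact (m j).zero_mem
    have hYm : Y ∈ Submodule.pi Set.univ m := by
      intro j _
      simp only [hY]
      split
      · next hj => subst hj; exact hy
      · exact (m j).zero_mem
    have hmem := h X hXm Y hYm (i + 2) (Set.mem_univ _)
    have e1 : i + 2 + 1 = i := by omega
    have e2 : i + 2 + 2 = i + 1 := by omega
    have hi1 : i + 1 ≠ i := by omega
    have hXi : X (i + 2 + 1) = x := by rw [e1]; simp [hX]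
    have hYi : Y (i + 2 + 2) = y := by rw [e2]; simp [hY]
    have hYz : Y (i + 2 + 1) = 0 := by rw [e1]; simp [hY, hi1.symm]
    have hval : nahmMul 𝕜 X Y (i + 2) = (2 : 𝕜)⁻¹ • ⁅x, y⁆ := by
      simp [nahmMul, hXi, hYi, hYz]
    rw [hval] at hmem
    have := (m (i + 2)).smul_mem (2 : 𝕜) hmem
    rwa [smul_smul, mul_inv_cancel₀ two_ne, one_smul] at this
  · intro h X hX Y hY i _
    have e : i + 1 + 2 = i := by omega
    have h1 : ⁅X (i + 1), Y (i + 2)⁆ ∈ m i := by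
      have := h (i + 1) (X (i + 1)) (hX (i + 1) (Set.mem_univ _))
        (Y (i + 1 + 1)) (hY (i + 1 + 1) (Set.mem_univ _))
      rw [e] at this
      have e2 : i + 1 + 1 = i + 2 := by omega
      rwa [e2] at this
    have h2 : ⁅Y (i + 1), X (i + 2)⁆ ∈ m i := by
      have := h (i + 1) (Y (i + 1)) (hY (i + 1) (Set.mem_univ _))
        (X (i + 1 + 1)) (hX (i + 1 + 1) (Set.mem_univ _))
      rw [e] at this
      have e2 : i + 1 + 1 = i + 2 := by omega
      rwa [e2] at this
    exact (m i).smul_mem _ ((m i).add_mem h1 h2)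
end

section
/- Let J be an ideal of the Nahm algebra A(g), and let hᵢ = πᵢ(J) ⊆ g be the image of J under the i-th projection. Then [g, hᵢ] ⊆ hᵢ₊₁ ∩ hᵢ₊₂ for i = 1, 2, 3 (indices mod 3). -/
theorem nahm_ideal_proj (𝕜 : Type*) [RCLike 𝕜] (L : Type*) [LieRing L] [LieAlgebra 𝕜 L]
    (J : Submodule 𝕜 (Fin 3 → L))
    (hJ : ∀ X : Fin 3 → L, ∀ Y ∈ J, nahmMul 𝕜 X Y ∈ J) :
    ∀ i : Fin 3, ∀ x : L,
      ∀ y ∈ Submodule.map (LinearMap.proj i : (Fin 3 → L) →ₗ[𝕜] L) J,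
        ⁅x, y⁆ ∈ Submodule.map (LinearMap.proj (i + 1) : (Fin 3 → L) →ₗ[𝕜] L) J ⊓
          Submodule.map (LinearMap.proj (i + 2) : (Fin 3 → L) →ₗ[𝕜] L) J := by
  intro i x y hy
  obtain ⟨Y, hY, rfl⟩ := hy
  have h2 : (2 : 𝕜)⁻¹ * 2 = 1 := by norm_num
  rw [Submodule.mem_inf]
  constructor
  · refine Submodule.mem_map.mpr
      ⟨nahmMul 𝕜 (Pi.single (i + 2) ((2:𝕜) • x)) Y, hJ _ Y hY, ?_⟩
    fin_cases i <;>
      simp [nahmMul, Pi.single_apply, smul_smul, h2, smul_lie, lie_smul, Fin.ext_iff]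
  · refine Submodule.mem_map.mpr
      ⟨nahmMul 𝕜 (Pi.single (i + 1) (-((2:𝕜) • x))) Y, hJ _ Y hY, ?_⟩
    fin_cases i <;>
      simp [nahmMul, Pi.single_apply, smul_smul, h2, smul_lie, lie_smul, Fin.ext_iff, lie_neg, smul_neg, neg_smul, lie_skew]
end

section
/- If J is an ideal of the Nahm algebra A(g) and hᵢ = πᵢ(J) for i = 1, 2, 3, then h₁ ∩ h₂ ∩ h₃ is a Lie ideal of g. -/
lemma nahm_aux (𝕜 : Type*) [RCLike 𝕜] {L : Type*} [LieRing L] [LieAlgebra 𝕜 L]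
    (J : Submodule 𝕜 (Fin 3 → L))
    (hJ : ∀ X : Fin 3 → L, ∀ Y ∈ J, nahmMul 𝕜 X Y ∈ J) (i : Fin 3) (x y : L)
    (hy : y ∈ Submodule.map (LinearMap.proj (i + 2) : (Fin 3 → L) →ₗ[𝕜] L) J) :
    ⁅x, y⁆ ∈ Submodule.map (LinearMap.proj i : (Fin 3 → L) →ₗ[𝕜] L) J := by
  obtain ⟨Y, hY, hYi⟩ := hy
  refine ⟨(2 : 𝕜) • nahmMul 𝕜 (Pi.single (i + 1) x) Y,
    Submodule.smul_mem _ _ (hJ _ _ hY), ?_⟩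
  have h12 : i + 2 ≠ i + 1 := fun h => absurd (add_left_cancel h) (by decide)
  simp only [LinearMap.proj_apply] at hYi ⊢
  simp only [Pi.smul_apply, nahmMul, Pi.single_eq_same,
    Pi.single_eq_of_ne h12, hYi, lie_zero, add_zero, smul_smul,
    mul_inv_cancel₀ (two_ne_zero : (2 : 𝕜) ≠ 0), one_smul]

theorem nahm_ideal_proj_inter_lieIdeal (𝕜 : Type*) [RCLike 𝕜] (L : Type*) [LieRing L]
    [LieAlgebra 𝕜 L] (J : Submodule 𝕜 (Fin 3 → L))
    (hJ : ∀ X : Fin 3 → L, ∀ Y ∈ J, nahmMul 𝕜 X Y ∈ J) :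
    ∀ x : L,
      ∀ y ∈ Submodule.map (LinearMap.proj (0 : Fin 3) : (Fin 3 → L) →ₗ[𝕜] L) J ⊓
          Submodule.map (LinearMap.proj (1 : Fin 3) : (Fin 3 → L) →ₗ[𝕜] L) J ⊓
          Submodule.map (LinearMap.proj (2 : Fin 3) : (Fin 3 → L) →ₗ[𝕜] L) J,
        ⁅x, y⁆ ∈ Submodule.map (LinearMap.proj (0 : Fin 3) : (Fin 3 → L) →ₗ[𝕜] L) J ⊓
          Submodule.map (LinearMap.proj (1 : Fin 3) : (Fin 3 → L) →ₗ[𝕜] L) J ⊓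
          Submodule.map (LinearMap.proj (2 : Fin 3) : (Fin 3 → L) →ₗ[𝕜] L) J := by
  rintro x y ⟨⟨h0, h1⟩, h2⟩
  exact ⟨⟨nahm_aux 𝕜 J hJ 0 x y h2, nahm_aux 𝕜 J hJ 1 x y h0⟩,
    nahm_aux 𝕜 J hJ 2 x y h1⟩
end

section
/- Let h₁, h₂, h₃ be subspaces of a Lie algebra g and J = h₁ × h₂ × h₃. Then J is an ideal of the Nahm algebra A(g) if and only if [g, hᵢ] ⊆ hᵢ₊₁ ∩ hᵢ₊₂ for i = 1, 2, 3 (indices mod 3). -/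
theorem nahm_prod_ideal_iff (𝕜 : Type*) [RCLike 𝕜] (L : Type*) [LieRing L] [LieAlgebra 𝕜 L]
    (h : Fin 3 → Submodule 𝕜 L) :
    (∀ X : Fin 3 → L, ∀ Y ∈ Submodule.pi Set.univ h,
        nahmMul 𝕜 X Y ∈ Submodule.pi Set.univ h) ↔
      ∀ i : Fin 3, ∀ x : L, ∀ y ∈ h i, ⁅x, y⁆ ∈ h (i + 1) ⊓ h (i + 2) := by
  have key : ∀ i : Fin 3, i + 1 + 2 = i ∧ i + 2 + 1 = i ∧ i + 2 ≠ i ∧ i ≠ i + 2 ∧ i + 1 ≠ i ∧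
      i ≠ i + 1 := by decide
  have key2 : ∀ i : Fin 3, i + 1 + 1 = i + 2 ∧ i + 2 + 2 = i + 1 := by decide
  have two_ne : (2 : 𝕜) ≠ 0 := two_ne_zero
  have recover : ∀ v : L, (2 : 𝕜) • ((2 : 𝕜)⁻¹ • v) = v := by
    intro v; rw [smul_smul, mul_inv_cancel₀ two_ne, one_smul]
  constructor
  · intro H i x y hy
    have hY : (fun j => if j = i then y else 0) ∈ Submodule.pi Set.univ h := by
      intro j _
      by_cases hj : j = i
      · simp only [hj, if_pos rfl]; exact hj ▸ hy
      · simp only [if_neg hj]; exact (h j).zero_mem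
    constructor
    · have := H (fun j => if j = i + 2 then x else 0) _ hY (i + 1) (Set.mem_univ _)
      simp only [nahmMul, (key i).1, (key i).2.1, (key2 i).1, if_pos rfl, if_neg (key i).2.2.1,
        if_neg (key i).2.2.2.1, if_true, lie_zero, zero_lie, add_zero] at this
      have h2 := (h (i + 1)).smul_mem (2 : 𝕜) this
      rwa [recover] at h2
    · have := H (fun j => if j = i + 1 then x else 0) _ hY (i + 2) (Set.mem_univ _)
      simp only [nahmMul, (key i).1, (key i).2.1, (key2 i).2, if_pos rfl,
        if_neg (key i).2.2.2.2.1, if_neg (key i).2.2.2.2.2, if_true, lie_zero, zero_lie,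
        zero_add] at this
      have h2 := (h (i + 2)).smul_mem (2 : 𝕜) this
      rw [recover] at h2
      have := (h (i + 2)).neg_mem h2
      rwa [lie_skew] at this
  · intro H X Y hY j _
    apply (h j).smul_mem
    apply (h j).add_mem
    · have := (H (j + 2) (X (j + 1)) (Y (j + 2)) (hY (j + 2) (Set.mem_univ _))).1
      rwa [(key j).2.1] at this
    · have := (H (j + 1) (X (j + 2)) (Y (j + 1)) (hY (j + 1) (Set.mem_univ _))).2
      rw [(key j).1] at this
      have := (h j).neg_mem this
      rwa [lie_skew] at this
end

section
/- Let h be a subspace of a Lie algebra g. Then h × h × h is an ideal of the Nahm algebra A(g) if and only if h is a Lie ideal of g. -/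
theorem nahm_cube_ideal_iff (𝕜 : Type*) [RCLike 𝕜] (L : Type*) [LieRing L] [LieAlgebra 𝕜 L]
    (h : Submodule 𝕜 L) :
    (∀ X : Fin 3 → L, ∀ Y ∈ Submodule.pi Set.univ (fun _ : Fin 3 => h),
        nahmMul 𝕜 X Y ∈ Submodule.pi Set.univ (fun _ : Fin 3 => h)) ↔
      ∀ x : L, ∀ y ∈ h, ⁅x, y⁆ ∈ h := by
  constructor
  · intro H x y hy
    have hmem : (fun _ : Fin 3 => y) ∈ Submodule.pi Set.univ (fun _ : Fin 3 => h) := by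
      intro i _; exact hy
    have h2 := H (fun j => if j = 0 then x else 0) _ hmem 2 (Set.mem_univ _)
    simp only [nahmMul] at h2
    rw [if_pos (by decide : (2+1 : Fin 3) = 0), if_neg (by decide : ¬(2+2 : Fin 3) = 0),
      lie_zero, add_zero] at h2
    have := h.smul_mem (2 : 𝕜) h2
    rwa [smul_smul, mul_inv_cancel₀ (by norm_num : (2:𝕜) ≠ 0), one_smul] at this
  · intro H X Y hY i _
    apply h.smul_mem
    apply h.add_mem
    · exact H _ _ (hY _ (Set.mem_univ _))
    · have : ⁅X (i + 2), Y (i + 1)⁆ ∈ h := H _ _ (hY _ (Set.mem_univ _))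
      have := h.neg_mem this
      rwa [← lie_skew]
end

section
/- Let Δ(g) = {(x,x,x) : x ∈ g} and W(g) = {(x₁,x₂,x₃) ∈ g³ : x₁+x₂+x₃ = 0}. Then A(g) = Δ(g) ⊕ W(g) as vector spaces, Δ(g)·W(g) ⊆ W(g), and W(g)·W(g) ⊆ Δ(g); that is, this decomposition is a ℤ₂-grading of the Nahm algebra A(g) with even part Δ(g) and odd part W(g). -/
theorem nahm_grading (𝕜 : Type*) [RCLike 𝕜] (L : Type*) [LieRing L] [LieAlgebra 𝕜 L] :
    let Δ : Submodule 𝕜 (Fin 3 → L) :=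
      LinearMap.range (LinearMap.pi fun _ : Fin 3 => (LinearMap.id : L →ₗ[𝕜] L))
    let W : Submodule 𝕜 (Fin 3 → L) :=
      LinearMap.ker (∑ i : Fin 3, (LinearMap.proj i : (Fin 3 → L) →ₗ[𝕜] L))
    Δ ⊓ W = ⊥ ∧ Δ ⊔ W = ⊤ ∧
      (∀ X ∈ Δ, ∀ Y ∈ W, nahmMul 𝕜 X Y ∈ W) ∧
      (∀ X ∈ W, ∀ Y ∈ W, nahmMul 𝕜 X Y ∈ Δ) := by
  intro Δ W
  have memW : ∀ v : Fin 3 → L, v ∈ W ↔ v 0 + v 1 + v 2 = 0 := by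
    intro v
    simp [W, LinearMap.mem_ker, Fin.sum_univ_three]
  have memΔ : ∀ v : Fin 3 → L, v ∈ Δ ↔ ∃ x : L, (fun _ : Fin 3 => x) = v := by
    intro v
    constructor
    · rintro ⟨x, rfl⟩; exact ⟨x, by funext i; simp⟩
    · rintro ⟨x, rfl⟩; exact ⟨x, by funext i; simp⟩
  refine ⟨?_, ?_, ?_, ?_⟩
  · -- Δ ⊓ W = ⊥
    ext v
    simp only [Submodule.mem_inf, Submodule.mem_bot]
    constructor
    · rintro ⟨hΔ, hW⟩
      obtain ⟨x, rfl⟩ := (memΔ v).1 hΔ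
      have h := (memW _).1 hW
      have hx : x = 0 := by
        have h3 : (3 : 𝕜) • x = 0 := by
          rw [show (3:𝕜) = 1 + 1 + 1 by norm_num, add_smul, add_smul, one_smul]; exact h
        simpa [smul_eq_zero, show (3:𝕜) ≠ 0 by norm_num] using h3
      funext i; simp [hx]
    · rintro rfl
      exact ⟨(memΔ 0).2 ⟨0, by funext i; simp⟩, (memW 0).2 (by simp)⟩
  · -- Δ ⊔ W = ⊤
    rw [Submodule.eq_top_iff']
    intro v
    set s : L := (3 : 𝕜)⁻¹ • (v 0 + v 1 + v 2) with hs
    have hd : (fun _ : Fin 3 => s) ∈ Δ := (memΔ _).2 ⟨s, rfl⟩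
    have key : s + s + s = v 0 + v 1 + v 2 := by
      rw [hs, ← add_smul, ← add_smul,
        show (3:𝕜)⁻¹ + (3:𝕜)⁻¹ + (3:𝕜)⁻¹ = 1 by norm_num, one_smul]
    have hw : v - (fun _ : Fin 3 => s) ∈ W := by
      rw [memW]
      show v 0 - s + (v 1 - s) + (v 2 - s) = 0
      rw [show v 0 - s + (v 1 - s) + (v 2 - s) = (v 0 + v 1 + v 2) - (s + s + s) by abel,
        key, sub_self]
    simpa using Submodule.add_mem_sup hd hw
  · -- Δ · W ⊆ W
    intro X hX Y hY
    obtain ⟨x, rfl⟩ := (memΔ X).1 hX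
    have h := (memW Y).1 hY
    have hY' : Y 0 = -Y 1 - Y 2 := by
      rw [eq_sub_iff_add_eq, eq_neg_iff_add_eq_zero, ← h]; abel
    rw [memW]
    simp only [nahmMul, show (0:Fin 3)+1 = 1 from rfl, show (0:Fin 3)+2 = 2 from rfl,
      show (1:Fin 3)+1 = 2 from rfl, show (1:Fin 3)+2 = 0 from rfl,
      show (2:Fin 3)+1 = 0 from rfl, show (2:Fin 3)+2 = 1 from rfl,
      hY', lie_sub, sub_lie, lie_neg, neg_lie, lie_add, add_lie, smul_add, smul_sub, smul_neg]
    abel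
  · -- W · W ⊆ Δ
    intro X hX Y hY
    have hX' : X 0 = -X 1 - X 2 := by
      have h := (memW X).1 hX
      rw [eq_sub_iff_add_eq, eq_neg_iff_add_eq_zero, ← h]; abel
    have hY' : Y 0 = -Y 1 - Y 2 := by
      have h := (memW Y).1 hY
      rw [eq_sub_iff_add_eq, eq_neg_iff_add_eq_zero, ← h]; abel
    have ha : ∀ i j : Fin 3, ⁅Y i, X j⁆ = -⁅X j, Y i⁆ := fun i j => (lie_skew _ _).symm
    refine (memΔ _).2 ⟨(2:𝕜)⁻¹ • (⁅X 1, Y 2⁆ + ⁅Y 1, X 2⁆), ?_⟩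
    funext i
    match i with
    | 0 | 1 | 2 =>
      simp only [nahmMul, show (0:Fin 3)+1 = 1 from rfl, show (0:Fin 3)+2 = 2 from rfl,
        show (1:Fin 3)+1 = 2 from rfl, show (1:Fin 3)+2 = 0 from rfl,
        show (2:Fin 3)+1 = 0 from rfl, show (2:Fin 3)+2 = 1 from rfl,
        hX', hY', lie_sub, sub_lie, lie_neg, neg_lie, lie_add, add_lie, ha]
      try (congr 1; abel)
end

section
/- If E = (e₁,e₂,e₃) is an idempotent of the Nahm algebra A(g) (i.e., E·E = E and E ≠ 0), then the set {e₁, e₂, e₃} is linearly independent in g and satisfies [e₁,e₂] = e₃, [e₂,e₃] = e₁, [e₃,e₁] = e₂; in particular each eᵢ ≠ 0. -/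
theorem nahm_idempotent_structure (𝕜 : Type*) [RCLike 𝕜] (L : Type*) [LieRing L]
    [LieAlgebra 𝕜 L] (e : Fin 3 → L) (hE : nahmMul 𝕜 e e = e) (hne : e ≠ 0) :
    LinearIndependent 𝕜 e ∧ (∀ i : Fin 3, ⁅e i, e (i + 1)⁆ = e (i + 2)) ∧
      ∀ i : Fin 3, e i ≠ 0 := by
  have hA : ∀ i : Fin 3, i + 2 + 1 = i := by decide
  have hB : ∀ i : Fin 3, i + 2 + 2 = i + 1 := by decide
  have hcover : ∀ i j : Fin 3, j = i ∨ j = i + 1 ∨ j = i + 2 := by decide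
  have h : ∀ i : Fin 3, ⁅e (i + 1), e (i + 2)⁆ = e i := by
    intro i
    have h0 := congrFun hE i
    simp only [nahmMul] at h0
    rwa [← two_smul 𝕜, smul_smul, inv_mul_cancel₀ (two_ne_zero), one_smul] at h0
  have hb : ∀ i : Fin 3, ⁅e i, e (i + 1)⁆ = e (i + 2) := by
    intro i
    have h1 := h (i + 2)
    rwa [hA i, hB i] at h1
  have hz : ∀ i : Fin 3, e i ≠ 0 := by
    intro i hi
    apply hne
    have h2 : e (i + 2) = 0 := by rw [← hb i, hi, zero_lie]
    have h1 : e (i + 1) = 0 := by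
      have h3 := hb (i + 2)
      rw [hA i, hB i] at h3
      rw [← h3, h2, zero_lie]
    funext j
    rcases hcover i j with hj | hj | hj <;> rw [hj] <;> assumption
  have h01 : ⁅e 0, e 1⁆ = e 2 := by simpa using hb 0
  have h12 : ⁅e 1, e 2⁆ = e 0 := by simpa using hb 1
  have h20 : ⁅e 2, e 0⁆ = e 1 := by simpa using hb 2
  have h02 : ⁅e 0, e 2⁆ = -e 1 := by rw [← lie_skew, h20]
  have h10 : ⁅e 1, e 0⁆ = -e 2 := by rw [← lie_skew, h01]
  have h21 : ⁅e 2, e 1⁆ = -e 0 := by rw [← lie_skew, h12]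
  refine ⟨?_, hb, hz⟩
  rw [Fintype.linearIndependent_iff]
  intro g hg
  rw [Fin.sum_univ_three] at hg
  have z0 : g 0 • e 1 = 0 := by
    have hx := congrArg (fun x => ⁅e 0, ⁅e 1, x⁆⁆) hg
    simpa [lie_add, lie_smul, h01, h12, h20, h02, h10, h21] using hx
  have z1 : g 1 • e 2 = 0 := by
    have hx := congrArg (fun x => ⁅e 1, ⁅e 2, x⁆⁆) hg
    simpa [lie_add, lie_smul, h01, h12, h20, h02, h10, h21] using hx
  have z2 : g 2 • e 0 = 0 := by
    have hx := congrArg (fun x => ⁅e 2, ⁅e 0, x⁆⁆) hg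
    simpa [lie_add, lie_smul, h01, h12, h20, h02, h10, h21] using hx
  have g0 : g 0 = 0 := (smul_eq_zero.mp z0).resolve_right (hz 1)
  have g1 : g 1 = 0 := (smul_eq_zero.mp z1).resolve_right (hz 2)
  have g2 : g 2 = 0 := (smul_eq_zero.mp z2).resolve_right (hz 0)
  intro i
  fin_cases i <;> assumption
end

section
/- Let g be a Lie algebra over ℝ or ℂ. The Nahm algebra A(g) is simple (i.e., A(g)·A(g) ≠ 0 and A(g) has no ideals other than 0 and itself) if and only if the Lie algebra g is simple. -/
namespace LieAlgebra

variable {R L : Type*} [CommRing R] [LieRing L] [LieAlgebra R L]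

theorem exists_lie_ne_zero [LieModule.IsFaithful R L L] {z : L} (hz : z ≠ 0) :
    ∃ x : L, ⁅x, z⁆ ≠ 0 := by
  by_contra! h
  have hz_center : z ∈ center R L := (LieModule.mem_maxTrivSubmodule R L L z).mpr h
  rw [center_eq_bot, LieSubmodule.mem_bot] at hz_center
  exact hz hz_center

theorem exists_lie_lie_ne_zero [LieModule.IsFaithful R L L] {z : L} (hz : z ≠ 0) :
    ∃ x x' : L, ⁅x', ⁅x, z⁆⁆ ≠ 0 := by
  obtain ⟨x, hx⟩ := exists_lie_ne_zero (R := R) hz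
  obtain ⟨x', hx'⟩ := exists_lie_ne_zero (R := R) hx
  exact ⟨x, x', hx'⟩

end LieAlgebra

section Nahm

variable {𝕜 : Type*} [RCLike 𝕜] {L : Type*} [LieRing L] [LieAlgebra 𝕜 L]

theorem nahmMul_single_succ_single (j : Fin 3) (x z : L) :
    nahmMul 𝕜 (Pi.single (j + 1) x) (Pi.single j z) = Pi.single (j + 2) ((2 : 𝕜)⁻¹ • ⁅z, x⁆) := by
  fin_cases j <;> funext i <;> fin_cases i <;> simp [nahmMul]

theorem nahmMul_single_add_two_single (j : Fin 3) (x z : L) :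
    nahmMul 𝕜 (Pi.single (j + 2) x) (Pi.single j z) = Pi.single (j + 1) ((2 : 𝕜)⁻¹ • ⁅x, z⁆) := by
  fin_cases j <;> funext i <;> fin_cases i <;> simp [nahmMul]

theorem nahmMul_single_succ_nahmMul_single (j : Fin 3) (x x' : L) (Y : Fin 3 → L) :
    nahmMul 𝕜 (Pi.single (j + 1) x') (nahmMul 𝕜 (Pi.single j x) Y) =
      Pi.single j ((2 : 𝕜)⁻¹ • (2 : 𝕜)⁻¹ • ⁅x', ⁅x, Y (j + 1)⁆⁆) := by
  fin_cases j <;> funext i <;> fin_cases i <;> simp [nahmMul]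

theorem exists_nahmMul_ne_zero_iff :
    (∃ X Y : Fin 3 → L, nahmMul 𝕜 X Y ≠ 0) ↔ ¬ IsLieAbelian L := by
  constructor
  · rintro ⟨X, Y, hXY⟩ hab
    exact hXY (funext fun i => by simp [nahmMul, hab.trivial])
  · intro hab
    obtain ⟨x, z, hxz⟩ : ∃ x z : L, ⁅z, x⁆ ≠ 0 := by
      by_contra! h
      exact hab ⟨fun z x => h x z⟩
    refine ⟨Pi.single (0 + 1) x, Pi.single 0 z, fun h => ?_⟩
    have h₂ := congrFun h (0 + 2)
    rw [nahmMul_single_succ_single, Pi.single_eq_same] at h₂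
    exact smul_ne_zero (inv_ne_zero two_ne_zero) hxz h₂

variable (𝕜) in
def IsNahmIdeal (J : Submodule 𝕜 (Fin 3 → L)) : Prop :=
  ∀ X : Fin 3 → L, ∀ Y ∈ J, nahmMul 𝕜 X Y ∈ J

namespace LieIdeal

def nahmPi (I : LieIdeal 𝕜 L) : Submodule 𝕜 (Fin 3 → L) :=
  Submodule.pi Set.univ fun _ => I.toSubmodule

theorem mem_nahmPi {I : LieIdeal 𝕜 L} {Z : Fin 3 → L} : Z ∈ I.nahmPi ↔ ∀ i, Z i ∈ I := by
  simp [nahmPi]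

theorem isNahmIdeal_nahmPi (I : LieIdeal 𝕜 L) : IsNahmIdeal 𝕜 I.nahmPi := by
  intro X Y hY
  rw [mem_nahmPi] at hY ⊢
  intro i
  refine I.toSubmodule.smul_mem _ (add_mem (I.lie_mem (hY _)) ?_)
  rw [← lie_skew]
  exact neg_mem (I.lie_mem (hY _))

theorem eq_bot_of_nahmPi_eq_bot {I : LieIdeal 𝕜 L} (h : I.nahmPi = ⊥) : I = ⊥ := by
  rw [LieSubmodule.eq_bot_iff]
  intro z hz
  have hconst : (fun _ => z : Fin 3 → L) ∈ I.nahmPi := mem_nahmPi.mpr fun _ => hz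
  rw [h, Submodule.mem_bot] at hconst
  exact congrFun hconst 0

theorem eq_top_of_nahmPi_eq_top {I : LieIdeal 𝕜 L} (h : I.nahmPi = ⊤) : I = ⊤ := by
  rw [eq_top_iff]
  intro z _
  exact mem_nahmPi.mp (h ▸ Submodule.mem_top : (fun _ => z : Fin 3 → L) ∈ I.nahmPi) 0

end LieIdeal

def nahmComponent (J : Submodule 𝕜 (Fin 3 → L)) (j : Fin 3) : Submodule 𝕜 L :=
  J.comap (LinearMap.single 𝕜 (fun _ => L) j)

theorem mem_nahmComponent {J : Submodule 𝕜 (Fin 3 → L)} {j : Fin 3} {z : L} :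
    z ∈ nahmComponent J j ↔ Pi.single j z ∈ J := by
  simp [nahmComponent]

namespace IsNahmIdeal

variable {J : Submodule 𝕜 (Fin 3 → L)} (hJ : IsNahmIdeal 𝕜 J)
include hJ

theorem lie_mem_nahmComponent_succ {j : Fin 3} {z : L} (hz : z ∈ nahmComponent J j) (x : L) :
    ⁅x, z⁆ ∈ nahmComponent J (j + 1) := by
  have h := hJ (Pi.single (j + 2) x) _ (mem_nahmComponent.mp hz)
  rw [nahmMul_single_add_two_single] at h
  rwa [← (nahmComponent J (j + 1)).smul_mem_iff (inv_ne_zero (two_ne_zero' 𝕜)),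
    mem_nahmComponent]

theorem lie_mem_nahmComponent_add_two {j : Fin 3} {z : L} (hz : z ∈ nahmComponent J j) (x : L) :
    ⁅x, z⁆ ∈ nahmComponent J (j + 2) := by
  have h := hJ (Pi.single (j + 1) x) _ (mem_nahmComponent.mp hz)
  rw [nahmMul_single_succ_single] at h
  rwa [← lie_skew, neg_mem_iff,
    ← (nahmComponent J (j + 2)).smul_mem_iff (inv_ne_zero (two_ne_zero' 𝕜)), mem_nahmComponent]

theorem lie_lie_apply_mem_nahmComponent {Y : Fin 3 → L} (hY : Y ∈ J) (j : Fin 3) (x x' : L) :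
    ⁅x', ⁅x, Y (j + 1)⁆⁆ ∈ nahmComponent J j := by
  have h := hJ (Pi.single (j + 1) x') _ (hJ (Pi.single j x) _ hY)
  rw [nahmMul_single_succ_nahmMul_single] at h
  have h2 : (2 : 𝕜)⁻¹ ≠ 0 := inv_ne_zero (two_ne_zero' 𝕜)
  rwa [← (nahmComponent J j).smul_mem_iff h2, ← (nahmComponent J j).smul_mem_iff h2,
    mem_nahmComponent]

/-- Two brackets suffice to reach every component, as `j ↦ j + 1` and `j ↦ j + 2` generate
`Fin 3` in two steps. -/
theorem lie_lie_mem_nahmComponent {j : Fin 3} {z : L} (hz : z ∈ nahmComponent J j) (x x' : L)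
    (m : Fin 3) :
    ⁅x', ⁅x, z⁆⁆ ∈ nahmComponent J m := by
  have h₁ := lie_mem_nahmComponent_succ hJ hz x
  have h₂ := lie_mem_nahmComponent_add_two hJ hz x
  obtain rfl | rfl | rfl := (by decide : ∀ a b : Fin 3, a = b ∨ a = b + 1 ∨ a = b + 2) m j
  · simpa [add_assoc] using lie_mem_nahmComponent_succ hJ h₂ x'
  · simpa [add_assoc] using lie_mem_nahmComponent_add_two hJ h₂ x'
  · simpa [add_assoc] using lie_mem_nahmComponent_succ hJ h₁ x'

def componentsLieIdeal : LieIdeal 𝕜 L where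
  carrier := {z | ∀ m, z ∈ nahmComponent J m}
  add_mem' ha hb m := add_mem (ha m) (hb m)
  zero_mem' m := zero_mem _
  smul_mem' c _ hz m := (nahmComponent J m).smul_mem c (hz m)
  lie_mem {x z} hz m := by simpa [add_assoc] using lie_mem_nahmComponent_succ hJ (hz (m + 2)) x

theorem mem_componentsLieIdeal {z : L} :
    z ∈ hJ.componentsLieIdeal ↔ ∀ m, z ∈ nahmComponent J m :=
  Iff.rfl

theorem eq_top_of_componentsLieIdeal_eq_top (h : hJ.componentsLieIdeal = ⊤) : J = ⊤ := by
  rw [eq_top_iff]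
  intro Z _
  rw [← Finset.univ_sum_single Z]
  refine Submodule.sum_mem _ fun i _ => mem_nahmComponent.mp ?_
  exact hJ.mem_componentsLieIdeal.mp (h ▸ LieSubmodule.mem_top (Z i)) i

theorem eq_bot_or_eq_top [LieAlgebra.IsSimple 𝕜 L] : J = ⊥ ∨ J = ⊤ := by
  refine or_iff_not_imp_left.mpr fun hJ_ne_bot => hJ.eq_top_of_componentsLieIdeal_eq_top ?_
  obtain ⟨Y, hY, hY_ne⟩ := J.ne_bot_iff.mp hJ_ne_bot
  obtain ⟨k, hk⟩ := Function.ne_iff.mp hY_ne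
  obtain ⟨x, x', hz⟩ := LieAlgebra.exists_lie_lie_ne_zero (R := 𝕜) hk
  have hz_mem : ⁅x', ⁅x, Y k⁆⁆ ∈ nahmComponent J (k + 2) := by
    simpa [add_assoc] using hJ.lie_lie_apply_mem_nahmComponent hY (k + 2) x x'
  obtain ⟨y, y', hu⟩ := LieAlgebra.exists_lie_lie_ne_zero (R := 𝕜) hz
  refine (LieAlgebra.IsSimple.eq_bot_or_eq_top _).resolve_left fun h => hu ?_
  have hu_mem := hJ.mem_componentsLieIdeal.mpr (hJ.lie_lie_mem_nahmComponent hz_mem y y')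
  rwa [h, LieSubmodule.mem_bot] at hu_mem

end IsNahmIdeal

end Nahm

theorem nahm_simple_iff (𝕜 : Type*) [RCLike 𝕜] (L : Type*) [LieRing L] [LieAlgebra 𝕜 L] :
    ((∃ X Y : Fin 3 → L, nahmMul 𝕜 X Y ≠ 0) ∧
      ∀ J : Submodule 𝕜 (Fin 3 → L),
        (∀ X : Fin 3 → L, ∀ Y ∈ J, nahmMul 𝕜 X Y ∈ J) → J = ⊥ ∨ J = ⊤) ↔
      LieAlgebra.IsSimple 𝕜 L := by
  constructor
  · rintro ⟨hmul, hsimple⟩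
    refine ⟨fun I => ?_, exists_nahmMul_ne_zero_iff.mp hmul⟩
    exact (hsimple _ I.isNahmIdeal_nahmPi).imp LieIdeal.eq_bot_of_nahmPi_eq_bot
      LieIdeal.eq_top_of_nahmPi_eq_top
  · intro hsimple
    exact ⟨exists_nahmMul_ne_zero_iff.mpr hsimple.non_abelian, fun _ hJ =>
      IsNahmIdeal.eq_bot_or_eq_top hJ⟩
end

section
/- Every skew-symmetric 3×3 matrix M over 𝕂 (𝕂 = ℝ or ℂ), acting on A(g) = g ⊗ 𝕂³ componentwise in the 𝕂³ factor (i.e., (M·X)ᵢ = ∑ⱼ Mᵢⱼ xⱼ), is a derivation of the Nahm algebra: M(X·Y) = (MX)·Y + X·(MY) for all X, Y ∈ A(g). Hence so(3,𝕂) embeds as a Lie subalgebra of Der(A(g)). -/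
def matAct (𝕜 : Type*) [RCLike 𝕜] {L : Type*} [LieRing L] [LieAlgebra 𝕜 L]
    (M : Matrix (Fin 3) (Fin 3) 𝕜) (X : Fin 3 → L) : Fin 3 → L :=
  fun i => ∑ j : Fin 3, M i j • X j

theorem so3_derivation (𝕜 : Type*) [RCLike 𝕜] (L : Type*) [LieRing L] [LieAlgebra 𝕜 L]
    (M : Matrix (Fin 3) (Fin 3) 𝕜) (hM : M.transpose = -M) (X Y : Fin 3 → L) :
    matAct 𝕜 M (nahmMul 𝕜 X Y) =
      nahmMul 𝕜 (matAct 𝕜 M X) Y + nahmMul 𝕜 X (matAct 𝕜 M Y) := by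
  have h : ∀ i j, M j i = -M i j := fun i j => by
    simpa using congrFun (congrFun hM i) j
  have h0 : ∀ i, M i i = 0 := fun i => by
    have hi := h i i; linear_combination (2:𝕜)⁻¹ * hi
  have hsk : ∀ i j, ⁅Y i, X j⁆ = -⁅X j, Y i⁆ := fun i j => by rw [← lie_skew]
  funext i
  fin_cases i <;>
  · simp only [show ((⟨0, by omega⟩ : Fin 3)) = 0 from rfl, show ((⟨1, by omega⟩ : Fin 3)) = 1 from rfl, show ((⟨2, by omega⟩ : Fin 3)) = 2 from rfl, nahmMul, matAct, Pi.add_apply, Fin.sum_univ_three, Fin.isValue,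
      Fin.reduceAdd, h0, h 0 1, h 0 2, h 1 2, show (0:Fin 3)+1 = 1 from rfl,
      show (0:Fin 3)+2 = 2 from rfl, show (1:Fin 3)+1 = 2 from rfl,
      show (1:Fin 3)+2 = 0 from rfl, show (2:Fin 3)+1 = 0 from rfl,
      show (2:Fin 3)+2 = 1 from rfl, zero_smul, neg_smul, smul_add, smul_neg,
      add_lie, lie_add, smul_lie, lie_smul, neg_lie, lie_neg, zero_add, add_zero, hsk]
    module
end

section
/- For every x in a Lie algebra g, the map diag(ad x) : A(g) → A(g) sending (y₁,y₂,y₃) to ([x,y₁],[x,y₂],[x,y₃]) is a derivation of the Nahm algebra A(g); moreover diag(ad x) commutes with the action of every skew-symmetric 3×3 matrix M on A(g). -/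
theorem diag_ad_derivation (𝕜 : Type*) [RCLike 𝕜] (L : Type*) [LieRing L] [LieAlgebra 𝕜 L]
    (x : L) :
    (∀ X Y : Fin 3 → L,
        (fun i => ⁅x, nahmMul 𝕜 X Y i⁆) =
          nahmMul 𝕜 (fun i => ⁅x, X i⁆) Y + nahmMul 𝕜 X (fun i => ⁅x, Y i⁆)) ∧
      ∀ M : Matrix (Fin 3) (Fin 3) 𝕜, M.transpose = -M →
        ∀ X : Fin 3 → L, matAct 𝕜 M (fun i => ⁅x, X i⁆) = fun i => ⁅x, matAct 𝕜 M X i⁆ := by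
  constructor
  · intro X Y
    funext i
    simp only [nahmMul, Pi.add_apply, lie_smul, lie_add, lie_lie]
    rw [← smul_add]
    congr 1
    abel
  · intro M _ X
    funext i
    simp [matAct, Fin.sum_univ_three]
end
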